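/- arXiv:2111.01392 — 2 statements merged into one kernel-verified Lean document; each statement's English description precedes it below -/
import Mathlib

section
/- Let A ∈ ℝ^{m×K}, B ∈ ℝ^{K×L}, C ∈ ℝ^{L×n} with K ≤ L, rank(B) = K, and m ≥ K, n ≥ L. Then the K-th largest singular value of the product satisfies σ_K(ABC) ≥ σ_K(A)·σ_K(B)·σ_L(C), where σ_j denotes the j-th largest singular value. -/
open Matrix

/-- The `j`-th largest entry of a tuple (`j` indexed from `0`). -/
noncomputable def kthLargest {n : ℕ} (f : Fin n → ℝ) (j : Fin n) : ℝ :=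
  f (Tuple.sort f j.rev)

/-- The `j`-th largest singular value (`j` indexed from `0`) of a real matrix,
defined as the square root of the `j`-th largest eigenvalue of `Mᵀ * M`. -/
noncomputable def singularValue {m n : ℕ} (M : Matrix (Fin m) (Fin n) ℝ) (j : Fin n) : ℝ :=
  Real.sqrt (kthLargest (show (Mᵀ * M).IsHermitian by
    simpa [Matrix.conjTranspose_eq_transpose_of_trivial] using
      Matrix.isHermitian_conjTranspose_mul_self M).eigenvalues j)

/-!
Write `a, b, c` for the three singular values on the left. As `A` has `K` columns,
`‖A y‖ ≥ a ‖y‖` for every `y`. As `B` has rank `K` and `C` at most `L` nonzero singular values,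
`‖B z‖ ≥ b ‖z‖` on the row space of `B` and `‖C x‖ ≥ c ‖x‖` on the row space of `C`.
If `c > 0`, then `C` has full row rank, so `C Cᵀ Q = Bᵀ` for some `Q`, and `W = range (Cᵀ Q)`
has dimension at least `rank B = K`. Each `x = Cᵀ Q w ∈ W` lies in the row space of `C`, and
`C x = Bᵀ w` lies in the row space of `B`, so `‖A B C x‖ ≥ a b c ‖x‖` on `W`. By the
Courant–Fischer principle, this bounds `σ_K(A B C)` from below by `a b c`.
-/

open Finset Module

section KthLargest

variable {n : ℕ} (f : Fin n → ℝ)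

theorem succ_le_card_filter_kthLargest_le (j : Fin n) :
    j.val + 1 ≤ #{i | kthLargest f j ≤ f i} := by
  calc j.val + 1 = #(Ici j.rev) := by rw [Fin.card_Ici, Fin.val_rev]; omega
    _ ≤ #{i | kthLargest f j ≤ f i} :=
      card_le_card_of_injOn (Tuple.sort f)
        (fun p hp => mem_coe.mpr <| mem_filter.mpr
          ⟨mem_univ _, Tuple.monotone_sort f (mem_Ici.mp (mem_coe.mp hp))⟩)
        (Tuple.sort f).injective.injOn

theorem card_filter_le_of_kthLargest_lt {j : Fin n} {c : ℝ} (h : kthLargest f j < c) :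
    #{i | c ≤ f i} ≤ j.val := by
  calc #{i | c ≤ f i} ≤ #(Ioi j.rev) :=
      card_le_card_of_injOn (Tuple.sort f).symm
        (fun i hi => mem_coe.mpr <| mem_Ioi.mpr <| lt_of_not_ge fun hle => by
          have hsort := Tuple.monotone_sort f hle
          rw [Function.comp_apply, Function.comp_apply, Equiv.apply_symm_apply] at hsort
          exact (not_le.mpr h) ((mem_filter.mp (mem_coe.mp hi)).2.trans hsort))
        (Tuple.sort f).symm.injective.injOn
    _ = j.val := by rw [Fin.card_Ioi, Fin.val_rev]; omega

theorem kthLargest_le_of_val_add_one_eq {j : Fin n} (hj : j.val + 1 = n) (i : Fin n) :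
    kthLargest f j ≤ f i := by
  by_contra! h
  have hi : i ∉ ({k | kthLargest f j ≤ f k} : Finset (Fin n)) := by simpa using h
  have := (card_lt_univ_of_notMem hi).trans_le' (succ_le_card_filter_kthLargest_le f j)
  simp only [Fintype.card_fin] at this
  omega

theorem eq_zero_or_kthLargest_le {j : Fin n} (hcard : #{i | f i ≠ 0} ≤ j.val + 1)
    (hpos : 0 < kthLargest f j) (i : Fin n) : f i = 0 ∨ kthLargest f j ≤ f i := by
  by_contra! h
  have hi : i ∉ ({k | kthLargest f j ≤ f k} : Finset (Fin n)) := by simpa using h.2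
  have hsub : insert i ({k | kthLargest f j ≤ f k} : Finset (Fin n)) ⊆
      ({k | f k ≠ 0} : Finset (Fin n)) := by
    intro k hk
    rcases mem_insert.mp hk with rfl | hk
    · simpa using h.1
    · simpa using ((mem_filter.mp hk).2.trans_lt' hpos).ne'
  have := (card_le_card hsub).trans' (card_insert_of_notMem hi).ge
  have := succ_le_card_filter_kthLargest_le f j
  omega

theorem succ_le_card_filter_ne_zero_of_kthLargest_pos {j : Fin n} (hpos : 0 < kthLargest f j) :
    j.val + 1 ≤ #{i | f i ≠ 0} :=
  (succ_le_card_filter_kthLargest_le f j).trans <|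
    card_le_card fun i hi => by simpa using ((mem_filter.mp hi).2.trans_lt' hpos).ne'

end KthLargest

namespace Matrix.IsHermitian

section

variable {ι : Type*} [Fintype ι] [DecidableEq ι] {H : Matrix ι ι ℝ} (hH : H.IsHermitian)

noncomputable def eigenCoords (x : ι → ℝ) : ι → ℝ :=
  (hH.eigenvectorUnitary : Matrix ι ι ℝ)ᵀ *ᵥ x

theorem eigenCoords_apply (x : ι → ℝ) (i : ι) :
    hH.eigenCoords x i = ⇑(hH.eigenvectorBasis i) ⬝ᵥ x := rfl

theorem eigenvectorUnitary_mul_transpose :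
    (hH.eigenvectorUnitary : Matrix ι ι ℝ) * (hH.eigenvectorUnitary : Matrix ι ι ℝ)ᵀ = 1 := by
  simpa [star_eq_conjTranspose] using Unitary.coe_mul_star_self hH.eigenvectorUnitary

theorem eigenvectorUnitary_mulVec_eigenCoords (x : ι → ℝ) :
    (hH.eigenvectorUnitary : Matrix ι ι ℝ) *ᵥ hH.eigenCoords x = x := by
  rw [eigenCoords, mulVec_mulVec, eigenvectorUnitary_mul_transpose, one_mulVec]

theorem dotProduct_self_eq_sum_eigenCoords_sq (x : ι → ℝ) :
    x ⬝ᵥ x = ∑ i, hH.eigenCoords x i ^ 2 := by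
  simp only [sq]
  rw [← dotProduct, eigenCoords, mulVec_transpose, ← dotProduct_mulVec, ← mulVec_transpose,
    mulVec_mulVec, eigenvectorUnitary_mul_transpose, one_mulVec]

theorem dotProduct_mulVec_eq_sum_eigenvalues_mul_eigenCoords_sq (x : ι → ℝ) :
    x ⬝ᵥ (H *ᵥ x) = ∑ i, hH.eigenvalues i * hH.eigenCoords x i ^ 2 := by
  conv_lhs => rw [hH.spectral_theorem, Unitary.conjStarAlgAut_apply]
  rw [star_eq_conjTranspose, conjTranspose_eq_transpose_of_trivial, ← mulVec_mulVec,
    ← mulVec_mulVec, dotProduct_mulVec, ← mulVec_transpose, ← eigenCoords]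
  simp [dotProduct, mulVec_diagonal, sq, mul_left_comm]

theorem mul_dotProduct_self_le_dotProduct_mulVec {c : ℝ} {x : ι → ℝ}
    (h : ∀ i, c ≤ hH.eigenvalues i ∨ hH.eigenCoords x i = 0) :
    c * (x ⬝ᵥ x) ≤ x ⬝ᵥ (H *ᵥ x) := by
  rw [hH.dotProduct_mulVec_eq_sum_eigenvalues_mul_eigenCoords_sq,
    hH.dotProduct_self_eq_sum_eigenCoords_sq, mul_sum]
  refine sum_le_sum fun i _ => ?_
  rcases h i with hc | hzero
  · exact mul_le_mul_of_nonneg_right hc (sq_nonneg _)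
  · simp [hzero]

theorem dotProduct_mulVec_lt_mul_dotProduct_self {c : ℝ} {x : ι → ℝ} (hx : x ≠ 0)
    (h : ∀ i, hH.eigenvalues i < c ∨ hH.eigenCoords x i = 0) :
    x ⬝ᵥ (H *ᵥ x) < c * (x ⬝ᵥ x) := by
  obtain ⟨i₀, hi₀⟩ : ∃ i, hH.eigenCoords x i ≠ 0 := by
    by_contra! hall
    exact hx (by simpa [show hH.eigenCoords x = 0 from funext hall] using
      (hH.eigenvectorUnitary_mulVec_eigenCoords x).symm)
  rw [hH.dotProduct_mulVec_eq_sum_eigenvalues_mul_eigenCoords_sq,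
    hH.dotProduct_self_eq_sum_eigenCoords_sq, mul_sum]
  refine sum_lt_sum (fun i _ => ?_) ⟨i₀, mem_univ _, ?_⟩
  · rcases h i with hc | hzero
    · exact mul_le_mul_of_nonneg_right hc.le (sq_nonneg _)
    · simp [hzero]
  · exact mul_lt_mul_of_pos_right ((h i₀).resolve_right hi₀) (by positivity)

end

section

variable {q : ℕ} {H : Matrix (Fin q) (Fin q) ℝ} (hH : H.IsHermitian)

/-- The lower half of the Courant–Fischer min-max principle. -/
theorem le_kthLargest_eigenvalues_of_le_finrank (j : Fin q) {c : ℝ}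
    (W : Submodule ℝ (Fin q → ℝ)) (hW : j.val + 1 ≤ finrank ℝ W)
    (hc : ∀ x ∈ W, c * (x ⬝ᵥ x) ≤ x ⬝ᵥ (H *ᵥ x)) :
    c ≤ kthLargest hH.eigenvalues j := by
  by_contra! hlt
  let S : Finset (Fin q) := {i | c ≤ hH.eigenvalues i}
  -- a nonzero `x ∈ W` with no component along eigenvalues `≥ c` violates `hc`
  let T : W →ₗ[ℝ] (S → ℝ) :=
    LinearMap.funLeft ℝ ℝ Subtype.val ∘ₗ (mulVecLin (hH.eigenvectorUnitary : Matrix _ _ ℝ)ᵀ) ∘ₗ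
      W.subtype
  have hdim : finrank ℝ (S → ℝ) < finrank ℝ W := by
    simpa using (card_filter_le_of_kthLargest_lt _ hlt).trans_lt (Nat.lt_of_succ_le hW)
  obtain ⟨⟨x, hxW⟩, hxT, hx0⟩ := Submodule.exists_mem_ne_zero_of_ne_bot
    (LinearMap.ker_ne_bot_of_finrank_lt hdim)
  have hcoords : ∀ i, hH.eigenvalues i < c ∨ hH.eigenCoords x i = 0 := fun i =>
    (lt_or_ge _ _).imp_right fun hi =>
      congr_fun (LinearMap.mem_ker.mp hxT : T ⟨x, hxW⟩ = 0) ⟨i, mem_filter.mpr ⟨mem_univ _, hi⟩⟩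
  exact (hc x hxW).not_gt
    (hH.dotProduct_mulVec_lt_mul_dotProduct_self (by simpa using hx0) hcoords)

end

end Matrix.IsHermitian

namespace Matrix

theorem isUnit_of_rank_eq_card {n K : Type*} [Fintype n] [DecidableEq n] [Field K]
    {G : Matrix n n K} (hG : G.rank = Fintype.card n) : IsUnit G := by
  refine mulVec_surjective_iff_isUnit.mp fun y => ?_
  have htop : LinearMap.range G.mulVecLin = ⊤ :=
    Submodule.eq_top_of_finrank_eq (by rw [← rank, hG, finrank_fintype_fun_eq_card])
  exact LinearMap.range_eq_top.mp htop y

variable {κ ι : Type*} [Fintype κ] (M : Matrix κ ι ℝ)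

theorem isHermitian_transpose_mul_self : (Mᵀ * M).IsHermitian := by
  simpa [conjTranspose_eq_transpose_of_trivial] using isHermitian_conjTranspose_mul_self M

variable [Fintype ι]

theorem dotProduct_mulVec_transpose_mul_self (x : ι → ℝ) :
    x ⬝ᵥ ((Mᵀ * M) *ᵥ x) = (M *ᵥ x) ⬝ᵥ (M *ᵥ x) := by
  rw [← mulVec_mulVec, dotProduct_mulVec, vecMul_transpose]

variable [DecidableEq ι]

theorem eigenvalues_transpose_mul_self_nonneg (i : ι) :
    0 ≤ (isHermitian_transpose_mul_self M).eigenvalues i := by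
  have hM : (Mᵀ * M).PosSemidef := by
    simpa [conjTranspose_eq_transpose_of_trivial] using posSemidef_conjTranspose_mul_self M
  exact hM.eigenvalues_nonneg i

theorem rank_eq_card_filter_eigenvalues_transpose_mul_self_ne_zero :
    M.rank = #{i | (isHermitian_transpose_mul_self M).eigenvalues i ≠ 0} := by
  rw [← rank_transpose_mul_self, (isHermitian_transpose_mul_self M).rank_eq_card_non_zero_eigs,
    Fintype.card_subtype]

/-- Vectors in the range of `Mᵀ` are orthogonal to the kernel of `Mᵀ * M`. -/
theorem eigenCoords_transpose_mulVec_eq_zero {i : ι}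
    (hi : (isHermitian_transpose_mul_self M).eigenvalues i = 0) (w : κ → ℝ) :
    (isHermitian_transpose_mul_self M).eigenCoords (Mᵀ *ᵥ w) i = 0 := by
  set v := ⇑((isHermitian_transpose_mul_self M).eigenvectorBasis i)
  have hv : M *ᵥ v = 0 := by
    rw [← dotProduct_self_eq_zero, ← dotProduct_mulVec_transpose_mul_self,
      (isHermitian_transpose_mul_self M).mulVec_eigenvectorBasis, hi, zero_smul, dotProduct_zero]
  rw [IsHermitian.eigenCoords_apply, dotProduct_mulVec, vecMul_transpose, hv, zero_dotProduct]

end Matrix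

section SingularValue

variable {p q : ℕ} (M : Matrix (Fin p) (Fin q) ℝ)

theorem singularValue_nonneg (j : Fin q) : 0 ≤ singularValue M j := Real.sqrt_nonneg _

theorem kthLargest_eigenvalues_transpose_mul_self_nonneg (j : Fin q) :
    0 ≤ kthLargest (isHermitian_transpose_mul_self M).eigenvalues j :=
  eigenvalues_transpose_mul_self_nonneg M _

theorem sq_singularValue (j : Fin q) :
    singularValue M j ^ 2 = kthLargest (isHermitian_transpose_mul_self M).eigenvalues j :=
  Real.sq_sqrt (kthLargest_eigenvalues_transpose_mul_self_nonneg M j)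

theorem succ_le_rank_of_singularValue_pos {j : Fin q} (h : 0 < singularValue M j) :
    j.val + 1 ≤ M.rank := by
  rw [rank_eq_card_filter_eigenvalues_transpose_mul_self_ne_zero]
  exact succ_le_card_filter_ne_zero_of_kthLargest_pos _ (Real.sqrt_pos.mp h)

theorem sq_singularValue_mul_dotProduct_self_le {j : Fin q} (hj : j.val + 1 = q) (x : Fin q → ℝ) :
    singularValue M j ^ 2 * (x ⬝ᵥ x) ≤ (M *ᵥ x) ⬝ᵥ (M *ᵥ x) := by
  rw [sq_singularValue, ← dotProduct_mulVec_transpose_mul_self]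
  exact (isHermitian_transpose_mul_self M).mul_dotProduct_self_le_dotProduct_mulVec
    fun i => Or.inl (kthLargest_le_of_val_add_one_eq _ hj i)

theorem sq_singularValue_mul_le_of_rank_le {j : Fin q} (hM : M.rank ≤ j.val + 1) (w : Fin p → ℝ) :
    singularValue M j ^ 2 * ((Mᵀ *ᵥ w) ⬝ᵥ (Mᵀ *ᵥ w)) ≤
      (M *ᵥ Mᵀ *ᵥ w) ⬝ᵥ (M *ᵥ Mᵀ *ᵥ w) := by
  set hH := isHermitian_transpose_mul_self M
  rw [sq_singularValue]
  rcases (kthLargest_eigenvalues_transpose_mul_self_nonneg M j).eq_or_lt with h0 | hpos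
  · rw [← h0, zero_mul]
    exact sum_nonneg fun i _ => mul_self_nonneg _
  rw [rank_eq_card_filter_eigenvalues_transpose_mul_self_ne_zero] at hM
  rw [← dotProduct_mulVec_transpose_mul_self M]
  refine hH.mul_dotProduct_self_le_dotProduct_mulVec fun i => ?_
  rcases eq_zero_or_kthLargest_le _ hM hpos i with hi | hi
  · exact Or.inr (eigenCoords_transpose_mulVec_eq_zero M hi w)
  · exact Or.inl hi

theorem le_sq_singularValue_of_le_finrank (j : Fin q) {c : ℝ} (W : Submodule ℝ (Fin q → ℝ))
    (hW : j.val + 1 ≤ finrank ℝ W) (hc : ∀ x ∈ W, c * (x ⬝ᵥ x) ≤ (M *ᵥ x) ⬝ᵥ (M *ᵥ x)) :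
    c ≤ singularValue M j ^ 2 := by
  rw [sq_singularValue]
  refine (isHermitian_transpose_mul_self M).le_kthLargest_eigenvalues_of_le_finrank j W hW
    fun x hx => ?_
  rw [dotProduct_mulVec_transpose_mul_self]
  exact hc x hx

end SingularValue

namespace Matrix

variable {ι κ : Type*} [Fintype ι] [Fintype κ]

theorem exists_mul_transpose_mul_eq [DecidableEq ι] {C : Matrix ι κ ℝ}
    (hC : C.rank = Fintype.card ι) {μ : Type*} (R : Matrix ι μ ℝ) :
    ∃ Q : Matrix ι μ ℝ, C * Cᵀ * Q = R :=
  ⟨(C * Cᵀ)⁻¹ * R, mul_nonsing_inv_cancel_left _ _ ((isUnit_iff_isUnit_det _).mp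
    (isUnit_of_rank_eq_card (by rw [rank_self_mul_transpose, hC])))⟩

theorem rank_le_rank_of_mul_transpose_mul_eq {μ : Type*} [Fintype μ] {B : Matrix μ ι ℝ}
    {C : Matrix ι κ ℝ} {Q : Matrix ι μ ℝ} (hQ : C * Cᵀ * Q = Bᵀ) : B.rank ≤ (Cᵀ * Q).rank := by
  have hB : (Cᵀ * Q)ᵀ * Cᵀ = B := by
    rw [← transpose_transpose B, ← hQ]
    simp only [transpose_mul, transpose_transpose, Matrix.mul_assoc]
  have := rank_mul_le_left (Cᵀ * Q)ᵀ Cᵀ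
  rwa [hB, rank_transpose] at this

end Matrix

theorem sq_singularValue_mul_mul_mul_dotProduct_self_le {m n K L : ℕ}
    (A : Matrix (Fin m) (Fin K) ℝ) (B : Matrix (Fin K) (Fin L) ℝ) (C : Matrix (Fin L) (Fin n) ℝ)
    {Q : Matrix (Fin L) (Fin K) ℝ} (hQ : C * Cᵀ * Q = Bᵀ) {i : Fin K} (hi : i.val + 1 = K)
    {j : Fin L} (hj : B.rank ≤ j.val + 1) {k : Fin n} (hk : C.rank ≤ k.val + 1) (w : Fin K → ℝ) :
    (singularValue A i * singularValue B j * singularValue C k) ^ 2 *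
        (((Cᵀ * Q) *ᵥ w) ⬝ᵥ ((Cᵀ * Q) *ᵥ w)) ≤
      ((A * B * C) *ᵥ (Cᵀ * Q) *ᵥ w) ⬝ᵥ ((A * B * C) *ᵥ (Cᵀ * Q) *ᵥ w) := by
  set y := Q *ᵥ w
  have hx : (Cᵀ * Q) *ᵥ w = Cᵀ *ᵥ y := by rw [← mulVec_mulVec]
  have hCy : C *ᵥ Cᵀ *ᵥ y = Bᵀ *ᵥ w := by rw [mulVec_mulVec, mulVec_mulVec, hQ]
  have hABCx : (A * B * C) *ᵥ Cᵀ *ᵥ y = A *ᵥ B *ᵥ Bᵀ *ᵥ w := by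
    simp only [← hCy, mulVec_mulVec, Matrix.mul_assoc]
  rw [hx, hABCx]
  calc _ = singularValue A i ^ 2 * singularValue B j ^ 2 *
          (singularValue C k ^ 2 * ((Cᵀ *ᵥ y) ⬝ᵥ (Cᵀ *ᵥ y))) := by ring
    _ ≤ singularValue A i ^ 2 * singularValue B j ^ 2 * ((Bᵀ *ᵥ w) ⬝ᵥ (Bᵀ *ᵥ w)) := by
      rw [← hCy]
      gcongr
      exact sq_singularValue_mul_le_of_rank_le C hk y
    _ ≤ singularValue A i ^ 2 * ((B *ᵥ Bᵀ *ᵥ w) ⬝ᵥ (B *ᵥ Bᵀ *ᵥ w)) := by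
      rw [mul_assoc]
      gcongr
      exact sq_singularValue_mul_le_of_rank_le B hj w
    _ ≤ _ := sq_singularValue_mul_dotProduct_self_le A hi _

theorem stmt_12 {m n K L : ℕ}
    (A : Matrix (Fin m) (Fin K) ℝ) (B : Matrix (Fin K) (Fin L) ℝ)
    (C : Matrix (Fin L) (Fin n) ℝ)
    (hK : 0 < K) (hKL : K ≤ L) (hrank : B.rank = K)
    (hnL : L ≤ n) :
    singularValue A ⟨K - 1, by omega⟩ * singularValue B ⟨K - 1, by omega⟩ *
        singularValue C ⟨L - 1, by omega⟩
      ≤ singularValue (A * B * C) ⟨K - 1, by omega⟩ := by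
  rcases (singularValue_nonneg C ⟨L - 1, by omega⟩).eq_or_lt with hC0 | hCpos
  · rw [← hC0, mul_zero]
    exact singularValue_nonneg _ _
  have hrankC : C.rank = L := by
    have := succ_le_rank_of_singularValue_pos C hCpos
    have := C.rank_le_height
    simp only at *
    omega
  obtain ⟨Q, hQ⟩ := exists_mul_transpose_mul_eq (by simpa using hrankC) Bᵀ
  refine le_of_pow_le_pow_left₀ two_ne_zero (singularValue_nonneg _ _) <|
    le_sq_singularValue_of_le_finrank _ _ (LinearMap.range (Cᵀ * Q).mulVecLin) ?_ ?_
  · have := rank_le_rank_of_mul_transpose_mul_eq hQ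
    change K - 1 + 1 ≤ (Cᵀ * Q).rank
    omega
  · rintro _ ⟨w, rfl⟩
    exact sq_singularValue_mul_mul_mul_dotProduct_self_le A B C hQ
      (by simp only; omega) (by simp only; omega) (by simp only; omega) w
end

section
/- Let Ω = U_r Λ U_c' be a compact SVD with U_c'U_c = I_{K_r} and Λ invertible, and suppose Ω = Π_r P Π_c'. Then U_r = Π_r B_r with B_r := P Π_c' U_c Λ⁻¹; in particular, U_r(i,:) = U_r(j,:) whenever Π_r(i,:) = Π_r(j,:). -/
/-!
Multiplying `Ω = U_r Λ U_cᵀ` on the right by `U_c Λ⁻¹` recovers `U_r`, since `U_cᵀ U_c = I` and `Λ`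
is invertible. Doing the same to `Ω = Π_r P Π_cᵀ` exhibits `U_r` as `Π_r` times a matrix, and each
row of a product `A * B` depends only on the corresponding row of `A`.
-/

open Matrix

namespace Matrix

variable {m n k o R : Type*} [Fintype n] [Fintype k] [DecidableEq k] [CommRing R]

theorem eq_mul_mul_inv_of_eq_mul_mul_transpose {Ω : Matrix m n R} {U : Matrix m k R}
    {D : Matrix k k R} {V : Matrix n k R} (hV : Vᵀ * V = 1) (hD : IsUnit D.det)
    (hΩ : Ω = U * D * Vᵀ) : U = Ω * V * D⁻¹ := by
  rw [hΩ, Matrix.mul_assoc (U * D), hV, Matrix.mul_one, Matrix.mul_assoc,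
    Matrix.mul_nonsing_inv _ hD, Matrix.mul_one]

omit [Fintype n] [DecidableEq k] in
theorem mul_row_eq_of_row_eq (A : Matrix m k R) (B : Matrix k o R) {i j : m} (h : A i = A j) :
    (A * B) i = (A * B) j := by
  rw [mul_apply_eq_vecMul, mul_apply_eq_vecMul, h]

end Matrix

theorem stmt_14 {nr nc Kr Kc : ℕ}
    (Ω : Matrix (Fin nr) (Fin nc) ℝ)
    (Ur : Matrix (Fin nr) (Fin Kr) ℝ) (lam : Fin Kr → ℝ)
    (Uc : Matrix (Fin nc) (Fin Kr) ℝ)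
    (PPr : Matrix (Fin nr) (Fin Kr) ℝ) (P : Matrix (Fin Kr) (Fin Kc) ℝ)
    (PPc : Matrix (Fin nc) (Fin Kc) ℝ)
    (hUc : Ucᵀ * Uc = 1)
    (hΛ : IsUnit (Matrix.diagonal lam).det)
    (hSVD : Ω = Ur * Matrix.diagonal lam * Ucᵀ)
    (hΩ : Ω = PPr * P * PPcᵀ) :
    Ur = PPr * (P * PPcᵀ * Uc * (Matrix.diagonal lam)⁻¹) ∧
    ∀ i j, PPr i = PPr j → Ur i = Ur j := by
  have hUr : Ur = PPr * (P * PPcᵀ * Uc * (Matrix.diagonal lam)⁻¹) := by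
    rw [eq_mul_mul_inv_of_eq_mul_mul_transpose hUc hΛ hSVD, hΩ]
    simp only [Matrix.mul_assoc]
  refine ⟨hUr, fun i j hij => ?_⟩
  rw [hUr]
  exact mul_row_eq_of_row_eq _ _ hij
end
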